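/- Let (Q₁,N₁) and (Q₂,N₂) be two classical solutions of the Q-system, both existing up to time τ. Then for all s ∈ [0,τ]: d/ds ∫₀¹ (P₀Q₁(s,·)(η) − P₀Q₂(s,·)(η))² dη = 2 ∫₀¹ P₀(Q₁(s,·) − Q₂(s,·))(η) · P₀(K∘Q₁(s,·) − K∘Q₂(s,·))(η) dη. In particular, if K is affine, K(φ) = kφ + b, then ‖P₀Q₁(τ,·) − P₀Q₂(τ,·)‖_{L²(0,1)} = e^{kτ} · ‖P₀Q₁(0,·) − P₀Q₂(0,·)‖_{L²(0,1)}. -/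

import Mathlib

/-!
Write `D = Q₁ - Q₂`. It solves `∂_τD + ∂_ηD = (1/N₁ - 1/N₂) + (K ∘ Q₁ - K ∘ Q₂)` and vanishes at
`η = 0` and at `η = 1`; the latter because `τ ↦ Q(τ,1)` and the constant `Φ_F` solve the same
Lipschitz ODE `y' = K(y) - K(Φ_F)`, by the PDE at `η = 1` and the definition of `N`.
Differentiating `∫ (P₀D)² = ∫ D² - (∫ D)²` under the integral gives `2 ∫ P₀D · P₀∂_τD`. Here `P₀`
kills the constant `1/N₁ - 1/N₂`, and the transport term contributes
`∫ D ∂_ηD - ∫ D · ∫ ∂_ηD = 0`, since both `D²/2` and `D` vanish at the ends.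
For affine `K` one has `P₀(K ∘ Q₁ - K ∘ Q₂) = k P₀D`, so `∫ (P₀D)²` solves `y' = 2ky`.
-/

open Real Set MeasureTheory Filter Topology
open scoped ENNReal

noncomputable section

/-- The time interval `[0, T)` in `ℝ`, where `T : ℝ≥0∞` may be `∞`. -/
def Ico0 (T : ℝ≥0∞) : Set ℝ := {τ : ℝ | 0 ≤ τ ∧ ENNReal.ofReal τ < T}

/-- Partial derivative in the time variable (one-sided at `τ = 0`). -/
def pdTau (Q : ℝ → ℝ → ℝ) (τ η : ℝ) : ℝ := derivWithin (fun s => Q s η) (Ici 0) τ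

/-- Partial derivative in the spatial variable (one-sided at `η = 0` and `η = 1`). -/
def pdEta (Q : ℝ → ℝ → ℝ) (τ η : ℝ) : ℝ := derivWithin (fun x => Q τ x) (Icc 0 1) η

/-- Assumption 1.1: `K ∈ C²(ℝ)` with `K'`, `K''` bounded on `ℝ` and `K > 0` on `[0, Φ_F]`. -/
structure KAssump (K : ℝ → ℝ) (ΦF : ℝ) : Prop where
  smooth : ContDiff ℝ 2 K
  bdd1 : ∃ C : ℝ, ∀ x : ℝ, |deriv K x| ≤ C
  bdd2 : ∃ C : ℝ, ∀ x : ℝ, |deriv (deriv K) x| ≤ C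
  pos : ∀ φ ∈ Icc (0 : ℝ) ΦF, 0 < K φ

/-- `k_min := K'(0) + ∫₀^{Φ_F} min(K''(φ), 0) dφ`. -/
def kmin (K : ℝ → ℝ) (ΦF : ℝ) : ℝ :=
  deriv K 0 + ∫ φ in (0 : ℝ)..ΦF, min (deriv (deriv K) φ) 0

/-- `k_max := K'(0) + ∫₀^{Φ_F} max(K''(φ), 0) dφ`. -/
def kmax (K : ℝ → ℝ) (ΦF : ℝ) : ℝ :=
  deriv K 0 + ∫ φ in (0 : ℝ)..ΦF, max (deriv (deriv K) φ) 0

/-- Assumption (A2) on the initial datum. -/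
structure A2 (K : ℝ → ℝ) (ΦF : ℝ) (Qinit : ℝ → ℝ) : Prop where
  reg : ContDiffOn ℝ 1 Qinit (Icc 0 1)
  mono : MonotoneOn Qinit (Icc 0 1)
  init0 : Qinit 0 = 0
  init1 : Qinit 1 = ΦF
  deriv1 : K ΦF < derivWithin Qinit (Icc 0 1) 1
  compat : derivWithin Qinit (Icc 0 1) 1 - derivWithin Qinit (Icc 0 1) 0 = K ΦF - K 0

/-- A classical solution `(Q, N)` of the Q-system on `[0, T)` with initial datum `Qinit`. -/
structure IsQSol (K : ℝ → ℝ) (ΦF : ℝ) (T : ℝ≥0∞) (Qinit : ℝ → ℝ)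
    (Q : ℝ → ℝ → ℝ) (N : ℝ → ℝ) : Prop where
  initReg : ContDiffOn ℝ 1 Qinit (Icc 0 1)
  initMono : MonotoneOn Qinit (Icc 0 1)
  init0 : Qinit 0 = 0
  init1 : Qinit 1 = ΦF
  initDeriv : K ΦF < derivWithin Qinit (Icc 0 1) 1
  reg : ContDiffOn ℝ 1 (Function.uncurry Q) (Ico0 T ×ˢ Icc (0 : ℝ) 1)
  mono : ∀ τ ∈ Ico0 T, MonotoneOn (Q τ) (Icc 0 1)
  Ncont : ContinuousOn N (Ico0 T)
  Npos : ∀ τ ∈ Ico0 T, 0 < N τ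
  pde : ∀ τ ∈ Ico0 T, ∀ η ∈ Ioo (0 : ℝ) 1,
    pdTau Q τ η + pdEta Q τ η = 1 / N τ + K (Q τ η)
  bc : ∀ τ ∈ Ico0 T, Q τ 0 = 0
  Ndef : ∀ τ ∈ Ico0 T, 1 / N τ = pdEta Q τ 1 - K ΦF
  init : ∀ η ∈ Icc (0 : ℝ) 1, Q 0 η = Qinit η
  constraint : ∀ τ ∈ Ico0 T, K ΦF < pdEta Q τ 1

/-- A classical solution `(Q, Ñ)` of the relaxed system on `[0, T)` with initial datum `Qinit`,
where `Ñ` is unconstrained in sign. -/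
structure IsRelaxedSol (K : ℝ → ℝ) (ΦF : ℝ) (T : ℝ≥0∞) (Qinit : ℝ → ℝ)
    (Q : ℝ → ℝ → ℝ) (Ntil : ℝ → ℝ) : Prop where
  initReg : ContDiffOn ℝ 1 Qinit (Icc 0 1)
  init0 : Qinit 0 = 0
  init1 : Qinit 1 = ΦF
  reg : ContDiffOn ℝ 1 (Function.uncurry Q) (Ico0 T ×ˢ Icc (0 : ℝ) 1)
  Ncont : ContinuousOn Ntil (Ico0 T)
  pde : ∀ τ ∈ Ico0 T, ∀ η ∈ Ioo (0 : ℝ) 1,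
    pdTau Q τ η + pdEta Q τ η = Ntil τ + K (Q τ η)
  bc : ∀ τ ∈ Ico0 T, Q τ 0 = 0
  Ndef : ∀ τ ∈ Ico0 T, Ntil τ = pdEta Q τ 1 - K ΦF
  init : ∀ η ∈ Icc (0 : ℝ) 1, Q 0 η = Qinit η

/-- A steady state `(Q*, N*)` of the Q-system. -/
def IsSteadyState (K : ℝ → ℝ) (ΦF : ℝ) (Qs : ℝ → ℝ) (Ns : ℝ) : Prop :=
  ContDiffOn ℝ 1 Qs (Icc 0 1) ∧ 0 < Ns ∧
    (∀ η ∈ Icc (0 : ℝ) 1, derivWithin Qs (Icc 0 1) η = K (Qs η) + 1 / Ns) ∧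
    Qs 0 = 0 ∧ Qs 1 = ΦF

/-- `P₀ f := f - ∫₀¹ f`. -/
def P0 (f : ℝ → ℝ) (η : ℝ) : ℝ := f η - ∫ x in (0 : ℝ)..1, f x

/-- `H_init := Q_init' - K ∘ Q_init` (derivative within `[0,1]`). -/
def Hinit (K : ℝ → ℝ) (Qinit : ℝ → ℝ) (η : ℝ) : ℝ :=
  derivWithin Qinit (Icc 0 1) η - K (Qinit η)

theorem P0_sub {f g : ℝ → ℝ} (hf : IntervalIntegrable f volume 0 1)
    (hg : IntervalIntegrable g volume 0 1) (η : ℝ) :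
    P0 (fun x => f x - g x) η = P0 f η - P0 g η := by
  simp only [P0, intervalIntegral.integral_sub hf hg]
  ring

theorem P0_const_mul (k : ℝ) (f : ℝ → ℝ) (η : ℝ) : P0 (fun x => k * f x) η = k * P0 f η := by
  simp only [P0, intervalIntegral.integral_const_mul]
  ring

theorem integral_P0_mul_P0 {f g : ℝ → ℝ} (hf : IntervalIntegrable f volume 0 1)
    (hg : IntervalIntegrable g volume 0 1)
    (hfg : IntervalIntegrable (fun η => f η * g η) volume 0 1) :
    ∫ η in (0 : ℝ)..1, P0 f η * P0 g η
      = (∫ η in (0 : ℝ)..1, f η * g η) - (∫ η in (0 : ℝ)..1, f η) * ∫ η in (0 : ℝ)..1, g η := by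
  set A := ∫ η in (0 : ℝ)..1, f η
  set B := ∫ η in (0 : ℝ)..1, g η
  have hexpand : (fun η => P0 f η * P0 g η) = fun η => f η * g η - B * f η - A * g η + A * B := by
    funext η
    simp only [P0, A, B]
    ring
  rw [hexpand, intervalIntegral.integral_add ((hfg.sub (hf.const_mul B)).sub (hg.const_mul A))
      intervalIntegrable_const, intervalIntegral.integral_sub (hfg.sub (hf.const_mul B))
      (hg.const_mul A), intervalIntegral.integral_sub hfg (hf.const_mul B),
    intervalIntegral.integral_const_mul, intervalIntegral.integral_const_mul,
    intervalIntegral.integral_const, smul_eq_mul]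
  ring

theorem integral_eq_sub_of_hasDerivWithinAt_Icc {f f' : ℝ → ℝ} {a b : ℝ} (hab : a ≤ b)
    (hf : ∀ x ∈ Icc a b, HasDerivWithinAt f (f' x) (Icc a b) x)
    (hf' : IntervalIntegrable f' volume a b) :
    ∫ x in a..b, f' x = f b - f a :=
  intervalIntegral.integral_eq_sub_of_hasDerivAt_of_le hab
    (fun x hx => (hf x hx).continuousWithinAt)
    (fun x hx => (hf x (Ioo_subset_Icc_self hx)).hasDerivAt (Icc_mem_nhds hx.1 hx.2)) hf'

section ParametricIntegral

variable {F F' : ℝ → ℝ → ℝ} {a b c d : ℝ}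

theorem continuousOn_intervalIntegral_of_continuousOn_uncurry (hcd : c ≤ d)
    (hF : ContinuousOn (Function.uncurry F) (Icc a b ×ˢ Icc c d)) :
    ContinuousOn (fun t => ∫ η in c..d, F t η) (Icc a b) := by
  obtain ⟨M, hM⟩ := (isCompact_Icc.prod isCompact_Icc).exists_bound_of_continuousOn hF
  have hsub : uIoc c d ⊆ Icc c d := by
    rw [uIoc_of_le hcd]
    exact Ioc_subset_Icc_self
  intro s hs
  apply intervalIntegral.continuousWithinAt_of_dominated_interval (bound := fun _ => M)
  · filter_upwards [self_mem_nhdsWithin] with t ht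
    exact ((hF.uncurry_left t ht).mono hsub).aestronglyMeasurable measurableSet_uIoc
  · filter_upwards [self_mem_nhdsWithin] with t ht
    exact .of_forall fun η hη => hM (t, η) ⟨ht, hsub hη⟩
  · exact intervalIntegrable_const
  · exact .of_forall fun η hη => hF.uncurry_right η (hsub hη) s hs

theorem intervalIntegral_eq_add_integral_integral_of_hasDerivWithinAt (hcd : c ≤ d)
    (hF : ContinuousOn (Function.uncurry F) (Icc a b ×ˢ Icc c d))
    (hF' : ContinuousOn (Function.uncurry F') (Icc a b ×ˢ Icc c d))
    (hderiv : ∀ t ∈ Icc a b, ∀ η ∈ Icc c d,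
      HasDerivWithinAt (fun t => F t η) (F' t η) (Icc a b) t) {r : ℝ} (hr : r ∈ Icc a b) :
    ∫ η in c..d, F r η = (∫ η in c..d, F a η) + ∫ t in a..r, ∫ η in c..d, F' t η := by
  have har : Icc a r ⊆ Icc a b := Icc_subset_Icc_right hr.2
  have hFTC : ∀ η ∈ Icc c d, ∫ t in a..r, F' t η = F r η - F a η := fun η hη =>
    integral_eq_sub_of_hasDerivWithinAt_Icc hr.1
      (fun t ht => (hderiv t (har ht) η hη).mono har)
      (((hF'.uncurry_right η hη).mono har).intervalIntegrable_of_Icc hr.1)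
  have hswap : ∫ t in a..r, ∫ η in c..d, F' t η = ∫ η in c..d, ∫ t in a..r, F' t η := by
    apply intervalIntegral_intervalIntegral_swap
    rw [uIoc_of_le hr.1, uIoc_of_le hcd]
    exact ((hF'.mono (prod_mono har subset_rfl)).integrableOn_compact
      (isCompact_Icc.prod isCompact_Icc)).mono_set
      (prod_mono Ioc_subset_Icc_self Ioc_subset_Icc_self)
  rw [hswap, intervalIntegral.integral_congr (g := fun η => F r η - F a η)
      (fun η hη => hFTC η (by rwa [uIcc_of_le hcd] at hη)),
    intervalIntegral.integral_sub ((hF.uncurry_left r hr).intervalIntegrable_of_Icc hcd)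
      ((hF.uncurry_left a (left_mem_Icc.2 (hr.1.trans hr.2))).intervalIntegrable_of_Icc hcd)]
  ring

theorem hasDerivWithinAt_intervalIntegral_of_continuousOn (hcd : c ≤ d)
    (hF : ContinuousOn (Function.uncurry F) (Icc a b ×ˢ Icc c d))
    (hF' : ContinuousOn (Function.uncurry F') (Icc a b ×ˢ Icc c d))
    (hderiv : ∀ t ∈ Icc a b, ∀ η ∈ Icc c d,
      HasDerivWithinAt (fun t => F t η) (F' t η) (Icc a b) t) {s : ℝ} (hs : s ∈ Icc a b) :
    HasDerivWithinAt (fun t => ∫ η in c..d, F t η) (∫ η in c..d, F' s η) (Icc a b) s := by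
  have hG := continuousOn_intervalIntegral_of_continuousOn_uncurry hcd hF'
  have : Fact (s ∈ Icc a b) := ⟨hs⟩
  have hprim : HasDerivWithinAt (fun r => ∫ t in a..r, ∫ η in c..d, F' t η)
      (∫ η in c..d, F' s η) (Icc a b) s :=
    intervalIntegral.integral_hasDerivWithinAt_right
      ((hG.mono (Icc_subset_Icc_right hs.2)).intervalIntegrable_of_Icc hs.1)
      ⟨Icc a b, self_mem_nhdsWithin, hG.aestronglyMeasurable measurableSet_Icc⟩ (hG s hs)
  exact (hprim.const_add _).congr_of_mem
    (fun r hr => intervalIntegral_eq_add_integral_integral_of_hasDerivWithinAt hcd hF hF'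
      hderiv hr) hs

end ParametricIntegral

theorem hasDerivWithinAt_integral_P0_sq {D Dt : ℝ → ℝ → ℝ} {a b : ℝ}
    (hD : ContinuousOn (Function.uncurry D) (Icc a b ×ˢ Icc 0 1))
    (hDt : ContinuousOn (Function.uncurry Dt) (Icc a b ×ˢ Icc 0 1))
    (hderiv : ∀ t ∈ Icc a b, ∀ η ∈ Icc (0 : ℝ) 1,
      HasDerivWithinAt (fun t => D t η) (Dt t η) (Icc a b) t) {s : ℝ} (hs : s ∈ Icc a b) :
    HasDerivWithinAt (fun t => ∫ η in (0 : ℝ)..1, P0 (D t) η ^ 2)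
      (2 * ∫ η in (0 : ℝ)..1, P0 (D s) η * P0 (Dt s) η) (Icc a b) s := by
  have hint : ∀ {f : ℝ → ℝ}, ContinuousOn f (Icc 0 1) → IntervalIntegrable f volume 0 1 :=
    fun hf => hf.intervalIntegrable_of_Icc zero_le_one
  have hvariance : ∀ t ∈ Icc a b, ∫ η in (0 : ℝ)..1, P0 (D t) η ^ 2
      = (∫ η in (0 : ℝ)..1, D t η ^ 2) - (∫ η in (0 : ℝ)..1, D t η) ^ 2 := fun t ht => by
    have hDslice := hD.uncurry_left t ht
    simpa only [sq] using
      integral_P0_mul_P0 (hint hDslice) (hint hDslice) (hint (hDslice.fun_mul hDslice))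
  have hderiv_sq : HasDerivWithinAt (fun t => ∫ η in (0 : ℝ)..1, D t η ^ 2)
      (∫ η in (0 : ℝ)..1, 2 * (D s η * Dt s η)) (Icc a b) s :=
    hasDerivWithinAt_intervalIntegral_of_continuousOn (F := fun t η => D t η ^ 2)
      (F' := fun t η => 2 * (D t η * Dt t η)) zero_le_one (hD.fun_pow 2)
      (continuousOn_const.fun_mul (hD.fun_mul hDt))
      (fun t ht η hη => ((hderiv t ht η hη).pow 2).congr_deriv (by ring)) hs
  have hderiv_mean : HasDerivWithinAt (fun t => ∫ η in (0 : ℝ)..1, D t η)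
      (∫ η in (0 : ℝ)..1, Dt s η) (Icc a b) s :=
    hasDerivWithinAt_intervalIntegral_of_continuousOn zero_le_one hD hDt hderiv hs
  have hDs := hD.uncurry_left s hs
  have hDts := hDt.uncurry_left s hs
  refine ((hderiv_sq.sub (hderiv_mean.pow 2)).congr_of_mem hvariance hs).congr_deriv ?_
  rw [integral_P0_mul_P0 (hint hDs) (hint hDts) (hint (hDs.fun_mul hDts)),
    intervalIntegral.integral_const_mul]
  ring

theorem integral_P0_mul_P0_eq_of_transport {d d' k u : ℝ → ℝ} (c : ℝ)
    (hd : ∀ η ∈ Icc (0 : ℝ) 1, HasDerivWithinAt d (d' η) (Icc 0 1) η)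
    (hd' : ContinuousOn d' (Icc 0 1)) (hk : ContinuousOn k (Icc 0 1))
    (h0 : d 0 = 0) (h1 : d 1 = 0) (hu : ∀ η ∈ Icc (0 : ℝ) 1, u η = c + k η - d' η) :
    ∫ η in (0 : ℝ)..1, P0 d η * P0 u η = ∫ η in (0 : ℝ)..1, P0 d η * P0 k η := by
  have hint : ∀ {f : ℝ → ℝ}, ContinuousOn f (Icc 0 1) → IntervalIntegrable f volume 0 1 :=
    fun hf => hf.intervalIntegrable_of_Icc zero_le_one
  have hdc : ContinuousOn d (Icc 0 1) := fun η hη => (hd η hη).continuousWithinAt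
  have huc : ContinuousOn u (Icc 0 1) := ((continuousOn_const.add hk).sub hd').congr hu
  have hmean_d' : ∫ η in (0 : ℝ)..1, d' η = 0 := by
    rw [integral_eq_sub_of_hasDerivWithinAt_Icc zero_le_one hd (hint hd'), h0, h1, sub_zero]
  have hmean_dd' : ∫ η in (0 : ℝ)..1, d η * d' η = 0 := by
    rw [integral_eq_sub_of_hasDerivWithinAt_Icc (f := fun η => d η ^ 2 / 2) zero_le_one
      (fun η hη => (((hd η hη).pow 2).div_const 2).congr_deriv (by ring)) (hint (hdc.fun_mul hd')),
      h0, h1]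
    ring
  have hmean_u : ∫ η in (0 : ℝ)..1, u η = c + ∫ η in (0 : ℝ)..1, k η := by
    rw [intervalIntegral.integral_congr (fun η hη => hu η (by rwa [uIcc_of_le zero_le_one] at hη)),
      intervalIntegral.integral_sub (intervalIntegrable_const.add (hint hk)) (hint hd'),
      intervalIntegral.integral_add intervalIntegrable_const (hint hk), hmean_d',
      intervalIntegral.integral_const, smul_eq_mul]
    ring
  have hmean_du : ∫ η in (0 : ℝ)..1, d η * u η
      = c * (∫ η in (0 : ℝ)..1, d η) + ∫ η in (0 : ℝ)..1, d η * k η := by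
    rw [intervalIntegral.integral_congr (g := fun η => c * d η + d η * k η - d η * d' η)
        (fun η hη => by
          rw [uIcc_of_le zero_le_one] at hη
          simp only [hu η hη]
          ring),
      intervalIntegral.integral_sub ((hint hdc).const_mul c |>.add (hint (hdc.fun_mul hk)))
        (hint (hdc.fun_mul hd')),
      intervalIntegral.integral_add ((hint hdc).const_mul c) (hint (hdc.fun_mul hk)),
      intervalIntegral.integral_const_mul, hmean_dd', sub_zero]
  rw [integral_P0_mul_P0 (hint hdc) (hint huc) (hint (hdc.fun_mul huc)),
    integral_P0_mul_P0 (hint hdc) (hint hk) (hint (hdc.fun_mul hk)), hmean_du, hmean_u]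
  ring

theorem eq_exp_mul_of_hasDerivWithinAt {f : ℝ → ℝ} {a b c : ℝ} (hab : a ≤ b)
    (hf : ∀ t ∈ Icc a b, HasDerivWithinAt f (c * f t) (Icc a b) t) :
    f b = exp (c * (b - a)) * f a := by
  set g := fun t => exp (-(c * (t - a))) * f t
  have hg : ∀ t ∈ Icc a b, HasDerivWithinAt g 0 (Icc a b) t := fun t ht => by
    have hexp : HasDerivAt (fun t => exp (-(c * (t - a)))) (exp (-(c * (t - a))) * -(c * 1)) t :=
      (((hasDerivAt_id t).sub_const a).const_mul c).neg.exp
    exact (hexp.hasDerivWithinAt.mul (hf t ht)).congr_deriv (by ring)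
  have hconst := constant_of_has_deriv_right_zero (fun t ht => (hg t ht).continuousWithinAt)
    (fun t ht => (hg t (Ico_subset_Icc_self ht)).mono_of_mem_nhdsWithin
      (Icc_mem_nhdsGE_of_mem ht)) b (right_mem_Icc.2 hab)
  simp only [g, sub_self, mul_zero, neg_zero, exp_zero, one_mul] at hconst
  rw [← hconst, ← mul_assoc, ← exp_add, add_neg_cancel, exp_zero, one_mul]

theorem Icc_subset_Ico0 {T : ℝ≥0∞} {τ : ℝ} (hτ : τ ∈ Ico0 T) : Icc 0 τ ⊆ Ico0 T :=
  fun _ ht => ⟨ht.1, (ENNReal.ofReal_le_ofReal ht.2).trans_lt hτ.2⟩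

theorem Ico0_mem_nhdsWithin_Ici {T : ℝ≥0∞} {s : ℝ} (hs : s ∈ Ico0 T) :
    Ico0 T ∈ 𝓝[Ici 0] s :=
  inter_mem_nhdsWithin (Ici 0)
    ((isOpen_lt ENNReal.continuous_ofReal continuous_const).mem_nhds hs.2)

theorem uniqueDiffOn_Ico0 (T : ℝ≥0∞) : UniqueDiffOn ℝ (Ico0 T) := fun s hs =>
  (uniqueDiffOn_Ici 0 s hs.1).mono_nhds (nhdsWithin_le_iff.2 (Ico0_mem_nhdsWithin_Ici hs))

section PartialDerivatives

variable {Q : ℝ → ℝ → ℝ} {T : ℝ≥0∞} {s η : ℝ}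

theorem hasDerivWithinAt_fderivWithin_time
    (hQ : ContDiffOn ℝ 1 (Function.uncurry Q) (Ico0 T ×ˢ Icc 0 1))
    (hs : s ∈ Ico0 T) (hη : η ∈ Icc (0 : ℝ) 1) :
    HasDerivWithinAt (fun t => Q t η)
      (fderivWithin ℝ (Function.uncurry Q) (Ico0 T ×ˢ Icc 0 1) (s, η) (1, 0)) (Ico0 T) s := by
  have hQd := ((hQ.differentiableOn one_ne_zero) _ (mk_mem_prod hs hη)).hasFDerivWithinAt
  exact hQd.comp_hasDerivWithinAt s
    ((hasDerivAt_id' s).prodMk (hasDerivAt_const s η)).hasDerivWithinAt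
    (fun _ ht => mk_mem_prod ht hη)

theorem hasDerivWithinAt_fderivWithin_space
    (hQ : ContDiffOn ℝ 1 (Function.uncurry Q) (Ico0 T ×ˢ Icc 0 1))
    (hs : s ∈ Ico0 T) (hη : η ∈ Icc (0 : ℝ) 1) :
    HasDerivWithinAt (Q s)
      (fderivWithin ℝ (Function.uncurry Q) (Ico0 T ×ˢ Icc 0 1) (s, η) (0, 1)) (Icc 0 1) η := by
  have hQd := ((hQ.differentiableOn one_ne_zero) _ (mk_mem_prod hs hη)).hasFDerivWithinAt
  exact hQd.comp_hasDerivWithinAt η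
    ((hasDerivAt_const η s).prodMk (hasDerivAt_id' η)).hasDerivWithinAt
    (fun _ hx => mk_mem_prod hs hx)

theorem pdTau_eq_fderivWithin (hQ : ContDiffOn ℝ 1 (Function.uncurry Q) (Ico0 T ×ˢ Icc 0 1))
    (hs : s ∈ Ico0 T) (hη : η ∈ Icc (0 : ℝ) 1) :
    pdTau Q s η = fderivWithin ℝ (Function.uncurry Q) (Ico0 T ×ˢ Icc 0 1) (s, η) (1, 0) :=
  ((hasDerivWithinAt_fderivWithin_time hQ hs hη).mono_of_mem_nhdsWithin
    (Ico0_mem_nhdsWithin_Ici hs)).derivWithin (uniqueDiffOn_Ici 0 s hs.1)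

theorem pdEta_eq_fderivWithin (hQ : ContDiffOn ℝ 1 (Function.uncurry Q) (Ico0 T ×ˢ Icc 0 1))
    (hs : s ∈ Ico0 T) (hη : η ∈ Icc (0 : ℝ) 1) :
    pdEta Q s η = fderivWithin ℝ (Function.uncurry Q) (Ico0 T ×ˢ Icc 0 1) (s, η) (0, 1) :=
  (hasDerivWithinAt_fderivWithin_space hQ hs hη).derivWithin (uniqueDiffOn_Icc zero_lt_one η hη)

theorem hasDerivWithinAt_pdTau (hQ : ContDiffOn ℝ 1 (Function.uncurry Q) (Ico0 T ×ˢ Icc 0 1))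
    (hs : s ∈ Ico0 T) (hη : η ∈ Icc (0 : ℝ) 1) :
    HasDerivWithinAt (fun t => Q t η) (pdTau Q s η) (Ico0 T) s :=
  pdTau_eq_fderivWithin hQ hs hη ▸ hasDerivWithinAt_fderivWithin_time hQ hs hη

theorem hasDerivWithinAt_pdEta (hQ : ContDiffOn ℝ 1 (Function.uncurry Q) (Ico0 T ×ˢ Icc 0 1))
    (hs : s ∈ Ico0 T) (hη : η ∈ Icc (0 : ℝ) 1) :
    HasDerivWithinAt (Q s) (pdEta Q s η) (Icc 0 1) η :=
  pdEta_eq_fderivWithin hQ hs hη ▸ hasDerivWithinAt_fderivWithin_space hQ hs hη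

theorem continuousOn_pdTau (hQ : ContDiffOn ℝ 1 (Function.uncurry Q) (Ico0 T ×ˢ Icc 0 1)) :
    ContinuousOn (Function.uncurry (pdTau Q)) (Ico0 T ×ˢ Icc 0 1) :=
  ((hQ.continuousOn_fderivWithin ((uniqueDiffOn_Ico0 T).prod (uniqueDiffOn_Icc zero_lt_one))
    le_rfl).clm_apply continuousOn_const).congr fun _ hp => pdTau_eq_fderivWithin hQ hp.1 hp.2

theorem continuousOn_pdEta (hQ : ContDiffOn ℝ 1 (Function.uncurry Q) (Ico0 T ×ˢ Icc 0 1)) :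
    ContinuousOn (Function.uncurry (pdEta Q)) (Ico0 T ×ˢ Icc 0 1) :=
  ((hQ.continuousOn_fderivWithin ((uniqueDiffOn_Ico0 T).prod (uniqueDiffOn_Icc zero_lt_one))
    le_rfl).clm_apply continuousOn_const).congr fun _ hp => pdEta_eq_fderivWithin hQ hp.1 hp.2

end PartialDerivatives

theorem KAssump.exists_lipschitzWith {K : ℝ → ℝ} {ΦF : ℝ} (hK : KAssump K ΦF) :
    ∃ C, LipschitzWith C K := by
  obtain ⟨C, hC⟩ := hK.bdd1
  refine ⟨C.toNNReal, lipschitzWith_of_nnnorm_deriv_le (hK.smooth.differentiable two_ne_zero)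
    fun x => ?_⟩
  rw [← NNReal.coe_le_coe, coe_nnnorm, Real.coe_toNNReal']
  exact (hC x).trans (le_max_left _ _)

namespace IsQSol

variable {K : ℝ → ℝ} {ΦF : ℝ} {T : ℝ≥0∞} {Qinit : ℝ → ℝ} {Q : ℝ → ℝ → ℝ} {N : ℝ → ℝ} {s : ℝ}

theorem continuousOn_slice (h : IsQSol K ΦF T Qinit Q N) (hs : s ∈ Ico0 T) :
    ContinuousOn (Q s) (Icc 0 1) :=
  h.reg.continuousOn.uncurry_left s hs

theorem pdTau_eq (h : IsQSol K ΦF T Qinit Q N) (hK : Continuous K) (hs : s ∈ Ico0 T) {η : ℝ}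
    (hη : η ∈ Icc (0 : ℝ) 1) : pdTau Q s η = 1 / N s + K (Q s η) - pdEta Q s η := by
  refine EqOn.of_subset_closure (f := pdTau Q s)
    (g := fun η => 1 / N s + K (Q s η) - pdEta Q s η) (fun η hη => ?_)
    ((continuousOn_pdTau h.reg).uncurry_left s hs)
    ((continuousOn_const.add (hK.comp_continuousOn (h.continuousOn_slice hs))).sub
      ((continuousOn_pdEta h.reg).uncurry_left s hs))
    Ioo_subset_Icc_self (closure_Ioo zero_ne_one).superset hη
  linarith [h.pde s hs η hη]

theorem apply_one_eq (h : IsQSol K ΦF T Qinit Q N) {C : NNReal} (hK : LipschitzWith C K)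
    (hs : s ∈ Ico0 T) : Q s 1 = ΦF := by
  have h1 : (1 : ℝ) ∈ Icc (0 : ℝ) 1 := right_mem_Icc.2 zero_le_one
  have hsub := Icc_subset_Ico0 hs
  have hderiv : ∀ t ∈ Ico 0 s,
      HasDerivWithinAt (fun t => Q t 1) (K (Q t 1) - K ΦF) (Ici t) t := by
    intro t ht
    have htT := hsub (Ico_subset_Icc_self ht)
    have hval : pdTau Q t 1 = K (Q t 1) - K ΦF := by
      rw [h.pdTau_eq hK.continuous htT h1, h.Ndef t htT]
      ring
    exact hval ▸ (hasDerivWithinAt_pdTau h.reg htT h1).mono_of_mem_nhdsWithin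
      (nhdsWithin_mono _ (Ici_subset_Ici.2 ht.1) (Ico0_mem_nhdsWithin_Ici htT))
  have huniq := ODE_solution_unique_of_mem_Icc_right (v := fun _ x => K x - K ΦF)
    (s := fun _ => univ) (fun _ _ => (hK.sub (LipschitzWith.const _)).lipschitzOnWith)
    (fun t ht => (hasDerivWithinAt_pdTau h.reg (hsub ht) h1).continuousWithinAt.mono hsub)
    hderiv (fun _ _ => mem_univ _) continuousOn_const
    (fun t _ => (hasDerivWithinAt_const t _ ΦF).congr_deriv (sub_self _).symm)
    (fun _ _ => mem_univ _) (by rw [h.init 1 h1, h.init1])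
  exact huniq (right_mem_Icc.2 hs.1)

end IsQSol

theorem hasDerivWithinAt_integral_sq_P0_sub {K : ℝ → ℝ} {ΦF : ℝ} {C : NNReal}
    (hK : LipschitzWith C K) {T₁ T₂ : ℝ≥0∞} {Qinit₁ Qinit₂ : ℝ → ℝ} {Q₁ Q₂ : ℝ → ℝ → ℝ}
    {N₁ N₂ : ℝ → ℝ} (h1 : IsQSol K ΦF T₁ Qinit₁ Q₁ N₁) (h2 : IsQSol K ΦF T₂ Qinit₂ Q₂ N₂)
    {τ s : ℝ} (hτ1 : τ ∈ Ico0 T₁) (hτ2 : τ ∈ Ico0 T₂) (hs : s ∈ Icc 0 τ) :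
    HasDerivWithinAt (fun r => ∫ η in (0 : ℝ)..1, (P0 (Q₁ r) η - P0 (Q₂ r) η) ^ 2)
      (2 * ∫ η in (0 : ℝ)..1,
        P0 (fun x => Q₁ s x - Q₂ s x) η * P0 (fun x => K (Q₁ s x) - K (Q₂ s x)) η)
      (Icc 0 τ) s := by
  have hsub1 := Icc_subset_Ico0 hτ1
  have hsub2 := Icc_subset_Ico0 hτ2
  have hR1 : Icc 0 τ ×ˢ Icc (0 : ℝ) 1 ⊆ Ico0 T₁ ×ˢ Icc 0 1 := prod_mono hsub1 subset_rfl
  have hR2 : Icc 0 τ ×ˢ Icc (0 : ℝ) 1 ⊆ Ico0 T₂ ×ˢ Icc 0 1 := prod_mono hsub2 subset_rfl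
  have hD : ContinuousOn (Function.uncurry fun r η => Q₁ r η - Q₂ r η)
      (Icc 0 τ ×ˢ Icc 0 1) :=
    (h1.reg.continuousOn.mono hR1).fun_sub (h2.reg.continuousOn.mono hR2)
  have hDt : ContinuousOn (Function.uncurry fun r η => pdTau Q₁ r η - pdTau Q₂ r η)
      (Icc 0 τ ×ˢ Icc 0 1) :=
    ((continuousOn_pdTau h1.reg).mono hR1).fun_sub ((continuousOn_pdTau h2.reg).mono hR2)
  have hderiv : ∀ t ∈ Icc 0 τ, ∀ η ∈ Icc (0 : ℝ) 1, HasDerivWithinAt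
      (fun r => Q₁ r η - Q₂ r η) (pdTau Q₁ t η - pdTau Q₂ t η) (Icc 0 τ) t :=
    fun t ht η hη => ((hasDerivWithinAt_pdTau h1.reg (hsub1 ht) hη).mono hsub1).sub
      ((hasDerivWithinAt_pdTau h2.reg (hsub2 ht) hη).mono hsub2)
  have hs1 := hsub1 hs
  have hs2 := hsub2 hs
  have htransport := integral_P0_mul_P0_eq_of_transport (1 / N₁ s - 1 / N₂ s)
    (d := fun η => Q₁ s η - Q₂ s η) (d' := fun η => pdEta Q₁ s η - pdEta Q₂ s η)
    (k := fun η => K (Q₁ s η) - K (Q₂ s η)) (u := fun η => pdTau Q₁ s η - pdTau Q₂ s η)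
    (fun η hη => (hasDerivWithinAt_pdEta h1.reg hs1 hη).sub
      (hasDerivWithinAt_pdEta h2.reg hs2 hη))
    (((continuousOn_pdEta h1.reg).uncurry_left s hs1).fun_sub
      ((continuousOn_pdEta h2.reg).uncurry_left s hs2))
    ((hK.continuous.comp_continuousOn (h1.continuousOn_slice hs1)).fun_sub
      (hK.continuous.comp_continuousOn (h2.continuousOn_slice hs2)))
    (by rw [h1.bc s hs1, h2.bc s hs2, sub_self])
    (by rw [h1.apply_one_eq hK hs1, h2.apply_one_eq hK hs2, sub_self])
    (fun η hη => by rw [h1.pdTau_eq hK.continuous hs1 hη, h2.pdTau_eq hK.continuous hs2 hη]; ring)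
  refine ((hasDerivWithinAt_integral_P0_sq hD hDt hderiv hs).congr_of_mem (fun r hr => ?_) hs)
    |>.congr_deriv (by rw [htransport])
  simp only [P0_sub ((h1.continuousOn_slice (hsub1 hr)).intervalIntegrable_of_Icc zero_le_one)
    ((h2.continuousOn_slice (hsub2 hr)).intervalIntegrable_of_Icc zero_le_one)]

theorem stmt9_general (ΦF : ℝ) (K : ℝ → ℝ) (hK : KAssump K ΦF)
    (T₁ T₂ : ℝ≥0∞) (Qinit₁ Qinit₂ : ℝ → ℝ) (Q₁ Q₂ : ℝ → ℝ → ℝ) (N₁ N₂ : ℝ → ℝ)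
    (h1 : IsQSol K ΦF T₁ Qinit₁ Q₁ N₁) (h2 : IsQSol K ΦF T₂ Qinit₂ Q₂ N₂)
    (τ : ℝ) (hτ0 : 0 ≤ τ) (hτ1 : ENNReal.ofReal τ < T₁) (hτ2 : ENNReal.ofReal τ < T₂) :
    (∀ s ∈ Icc 0 τ,
      HasDerivWithinAt
        (fun r => ∫ η in (0 : ℝ)..1, (P0 (Q₁ r) η - P0 (Q₂ r) η) ^ 2)
        (2 * ∫ η in (0 : ℝ)..1,
          P0 (fun x => Q₁ s x - Q₂ s x) η * P0 (fun x => K (Q₁ s x) - K (Q₂ s x)) η)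
        (Icc 0 τ) s) ∧
    (∀ k b : ℝ, (∀ φ : ℝ, K φ = k * φ + b) →
      Real.sqrt (∫ η in (0 : ℝ)..1, (P0 (Q₁ τ) η - P0 (Q₂ τ) η) ^ 2)
        = Real.exp (k * τ) *
          Real.sqrt (∫ η in (0 : ℝ)..1, (P0 (Q₁ 0) η - P0 (Q₂ 0) η) ^ 2)) := by
  obtain ⟨C, hKlip⟩ := hK.exists_lipschitzWith
  have hτ1' : τ ∈ Ico0 T₁ := ⟨hτ0, hτ1⟩
  have hτ2' : τ ∈ Ico0 T₂ := ⟨hτ0, hτ2⟩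
  have hderiv := fun s (hs : s ∈ Icc 0 τ) =>
    hasDerivWithinAt_integral_sq_P0_sub hKlip h1 h2 hτ1' hτ2' hs
  refine ⟨hderiv, fun k b hKaff => ?_⟩
  have hlinear : ∀ s ∈ Icc 0 τ,
      HasDerivWithinAt (fun r => ∫ η in (0 : ℝ)..1, (P0 (Q₁ r) η - P0 (Q₂ r) η) ^ 2)
        (2 * k * ∫ η in (0 : ℝ)..1, (P0 (Q₁ s) η - P0 (Q₂ s) η) ^ 2) (Icc 0 τ) s := by
    intro s hs
    have hKdiff : (fun x => K (Q₁ s x) - K (Q₂ s x)) = fun x => k * (Q₁ s x - Q₂ s x) := by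
      funext x
      rw [hKaff, hKaff]
      ring
    refine (hderiv s hs).congr_deriv ?_
    simp only [hKdiff, P0_const_mul, P0_sub
      ((h1.continuousOn_slice (Icc_subset_Ico0 hτ1' hs)).intervalIntegrable_of_Icc zero_le_one)
      ((h2.continuousOn_slice (Icc_subset_Ico0 hτ2' hs)).intervalIntegrable_of_Icc zero_le_one)]
    rw [mul_assoc, ← intervalIntegral.integral_const_mul k]
    congr 2
    funext η
    ring
  rw [eq_exp_mul_of_hasDerivWithinAt hτ0 hlinear, sub_zero, sqrt_mul (exp_pos _).le,
    show 2 * k * τ = k * τ + k * τ by ring, exp_add, sqrt_mul_self (exp_pos _).le]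

/-- Theorem 4.5: the modified `L²` estimate via the projection `P₀`, with exact exponential
behaviour for affine `K`. -/
theorem stmt9 (ΦF : ℝ) (hΦF : 0 < ΦF) (K : ℝ → ℝ) (hK : KAssump K ΦF)
    (T₁ T₂ : ℝ≥0∞) (Qinit₁ Qinit₂ : ℝ → ℝ) (Q₁ Q₂ : ℝ → ℝ → ℝ) (N₁ N₂ : ℝ → ℝ)
    (h1 : IsQSol K ΦF T₁ Qinit₁ Q₁ N₁) (h2 : IsQSol K ΦF T₂ Qinit₂ Q₂ N₂)
    (τ : ℝ) (hτ0 : 0 ≤ τ) (hτ1 : ENNReal.ofReal τ < T₁) (hτ2 : ENNReal.ofReal τ < T₂) :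
    (∀ s ∈ Icc 0 τ,
      HasDerivWithinAt
        (fun r => ∫ η in (0 : ℝ)..1, (P0 (Q₁ r) η - P0 (Q₂ r) η) ^ 2)
        (2 * ∫ η in (0 : ℝ)..1,
          P0 (fun x => Q₁ s x - Q₂ s x) η * P0 (fun x => K (Q₁ s x) - K (Q₂ s x)) η)
        (Icc 0 τ) s) ∧
    (∀ k b : ℝ, (∀ φ : ℝ, K φ = k * φ + b) →
      Real.sqrt (∫ η in (0 : ℝ)..1, (P0 (Q₁ τ) η - P0 (Q₂ τ) η) ^ 2)
        = Real.exp (k * τ) *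
          Real.sqrt (∫ η in (0 : ℝ)..1, (P0 (Q₁ 0) η - P0 (Q₂ 0) η) ^ 2)) :=
  stmt9_general ΦF K hK T₁ T₂ Qinit₁ Qinit₂ Q₁ Q₂ N₁ N₂ h1 h2 τ hτ0 hτ1 hτ2
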